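/- arXiv:0902.3423 — 3 statements merged into one kernel-verified Lean document; each statement's English description precedes it below -/
import Mathlib

section
/- There exists C < ∞ such that for all r > 0 and γ ∈ (0,1): ∫_ℝ |y − γ/2|·( e^{−(y−γ)²/(4r)} − e^{−y²/(4r)} )² dy ≤ C·(r^{1/2}·γ + γ²). -/
/-!
Write `A = exp(-(y-γ)²/(4r))`, `B = exp(-y²/(4r))`. Since `(y-γ)² - y² = -2γ(y-γ/2)`, the
difference `A - B` has the sign of `y - γ/2`, and `|A - B| ≤ 1`; hence the integrand is at most
`(y - γ/2)(A - B)`. The latter is integrable and its integral is computed exactly: shifting the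
first Gaussian by `γ` turns it into `γ·√(4πr)`, which is `≤ 4√r·γ`.
-/

open MeasureTheory Real

lemma integral_mul_exp_neg_mul_sq_eq_zero (b : ℝ) : ∫ z : ℝ, z * exp (-b * z ^ 2) = 0 := by
  have h := integral_neg_eq_self (fun z : ℝ => z * exp (-b * z ^ 2)) volume
  simp only [neg_sq, neg_mul, integral_neg] at h
  simpa only [neg_mul] using CharZero.eq_neg_self_iff.mp h.symm

lemma integrable_sub_mul_exp_neg_mul_sq_sub {b : ℝ} (hb : 0 < b) (a s : ℝ) :
    Integrable (fun z : ℝ => (z - a) * exp (-b * (z - s) ^ 2)) := by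
  have h := ((integrable_mul_exp_neg_mul_sq hb).add
    ((integrable_exp_neg_mul_sq hb).const_mul (s - a))).comp_sub_right s
  refine h.congr (ae_of_all _ fun z => ?_)
  simp only [Pi.add_apply]
  ring

lemma integral_sub_mul_exp_neg_mul_sq_sub {b : ℝ} (hb : 0 < b) (a s : ℝ) :
    ∫ z : ℝ, (z - a) * exp (-b * (z - s) ^ 2) = (s - a) * √(π / b) := by
  calc ∫ z : ℝ, (z - a) * exp (-b * (z - s) ^ 2)
      = ∫ z : ℝ, (z + (s - a)) * exp (-b * z ^ 2) := by
        conv_rhs => rw [← integral_sub_right_eq_self _ s]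
        simp only [sub_add_sub_cancel]
    _ = ∫ z : ℝ, (z * exp (-b * z ^ 2) + (s - a) * exp (-b * z ^ 2)) := by
        simp only [add_mul]
    _ = (s - a) * √(π / b) := by
        rw [integral_add (integrable_mul_exp_neg_mul_sq hb)
          ((integrable_exp_neg_mul_sq hb).const_mul _), integral_mul_exp_neg_mul_sq_eq_zero,
          integral_const_mul, integral_gaussian, zero_add]

lemma abs_mul_sq_le_mul {x d : ℝ} (hd : |d| ≤ 1) (hxd : 0 ≤ x * d) : |x| * d ^ 2 ≤ x * d :=
  calc |x| * d ^ 2 = |x * d| * |d| := by rw [abs_mul, mul_assoc, ← sq_abs d, sq]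
    _ ≤ |x * d| := mul_le_of_le_one_right (abs_nonneg _) hd
    _ = x * d := abs_of_nonneg hxd

lemma exp_neg_mul_sq_le_one {b : ℝ} (hb : 0 ≤ b) (x : ℝ) : exp (-b * x ^ 2) ≤ 1 :=
  exp_le_one_iff.mpr (mul_nonpos_of_nonpos_of_nonneg (neg_nonpos.mpr hb) (sq_nonneg x))

lemma sub_half_mul_exp_sub_nonneg {b γ : ℝ} (hb : 0 ≤ b) (hγ : 0 ≤ γ) (y : ℝ) :
    0 ≤ (y - γ / 2) * (exp (-b * (y - γ) ^ 2) - exp (-b * y ^ 2)) := by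
  have hbγ := mul_nonneg hb hγ
  rcases le_total (γ / 2) y with h | h
  · exact mul_nonneg (sub_nonneg.mpr h)
      (sub_nonneg.mpr (exp_le_exp.mpr (by nlinarith [mul_nonneg hbγ (sub_nonneg.mpr h)])))
  · exact mul_nonneg_of_nonpos_of_nonpos (sub_nonpos.mpr h)
      (sub_nonpos.mpr (exp_le_exp.mpr (by nlinarith [mul_nonneg hbγ (sub_nonneg.mpr h)])))

theorem integral_abs_sub_half_mul_sq_exp_sub_le {b γ : ℝ} (hb : 0 < b) (hγ : 0 ≤ γ) :
    ∫ y : ℝ, |y - γ / 2| * (exp (-b * (y - γ) ^ 2) - exp (-b * y ^ 2)) ^ 2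
      ≤ γ * √(π / b) := by
  have hint₁ := integrable_sub_mul_exp_neg_mul_sq_sub hb (γ / 2) γ
  have hint₂ := integrable_sub_mul_exp_neg_mul_sq_sub hb (γ / 2) 0
  simp only [sub_zero] at hint₂
  have hbound (y : ℝ) : |y - γ / 2| * (exp (-b * (y - γ) ^ 2) - exp (-b * y ^ 2)) ^ 2
      ≤ (y - γ / 2) * exp (-b * (y - γ) ^ 2) - (y - γ / 2) * exp (-b * y ^ 2) := by
    rw [← mul_sub]
    exact abs_mul_sq_le_mul (abs_sub_le_of_nonneg_of_le (exp_nonneg _)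
      (exp_neg_mul_sq_le_one hb.le _) (exp_nonneg _) (exp_neg_mul_sq_le_one hb.le _))
      (sub_half_mul_exp_sub_nonneg hb.le hγ y)
  calc _ ≤ ∫ y : ℝ, ((y - γ / 2) * exp (-b * (y - γ) ^ 2) - (y - γ / 2) * exp (-b * y ^ 2)) :=
        integral_mono_of_nonneg (ae_of_all _ fun y => by positivity) (hint₁.sub hint₂)
          (ae_of_all _ hbound)
    _ = γ * √(π / b) := by
        have h₂ := integral_sub_mul_exp_neg_mul_sq_sub hb (γ / 2) 0
        simp only [sub_zero] at h₂
        rw [integral_sub hint₁ hint₂, integral_sub_mul_exp_neg_mul_sq_sub hb, h₂]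
        ring

/-- There is `C < ∞` such that for all `r > 0` and `γ ∈ (0,1)`,
`∫ |y - γ/2|·(e^{-(y-γ)²/(4r)} - e^{-y²/(4r)})² dy ≤ C·(r^{1/2}·γ + γ²)`. -/
theorem weighted_gaussian_L2_increment :
    ∃ C : ℝ, 0 < C ∧ ∀ r γ : ℝ, 0 < r → γ ∈ Set.Ioo (0:ℝ) 1 →
      (∫ y : ℝ, |y - γ/2| * (Real.exp (-(y - γ)^2/(4*r)) - Real.exp (-y^2/(4*r)))^2)
        ≤ C * (Real.sqrt r * γ + γ^2) := by
  refine ⟨4, four_pos, fun r γ hr hγ => ?_⟩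
  have hγ₀ : 0 ≤ γ := hγ.1.le
  have hb : 0 < 1 / (4 * r) := by positivity
  have hexp (x : ℝ) : -x ^ 2 / (4 * r) = -(1 / (4 * r)) * x ^ 2 := by ring
  have hsqrt : √(π / (1 / (4 * r))) ≤ 4 * √r := by
    rw [sqrt_le_iff, mul_pow, sq_sqrt hr.le]
    refine ⟨by positivity, ?_⟩
    rw [one_div, div_inv_eq_mul]
    nlinarith [pi_le_four]
  simp only [hexp]
  calc _ ≤ γ * √(π / (1 / (4 * r))) := integral_abs_sub_half_mul_sq_exp_sub_le hb hγ₀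
    _ ≤ γ * (4 * √r) := by gcongr
    _ ≤ 4 * (√r * γ + γ ^ 2) := by nlinarith [sq_nonneg γ]
end

section
/- Fix v, λ with 1 ≤ λ ≤ 2 and vλ − λ²/2 ≥ 2a for some a ≥ 0, and let L ≥ 0. Define, for t ∈ [0,1], (G²⋆h)(t,x) = ∫∫₀^t G(t−s, x−y)²·h(y − v s + L) ds dy where h(x) = (1+|x|)e^{(1−δ/2)|x|} for x ≤ 0, and G is the heat kernel of ∂²_x. Then there exists C < ∞ (depending on v, λ, δ) with ∫∫₀^t e^{t−s}·G(t−s, x−y)·√(h(y − vs + L)) ds dy ≤ C·√(h(x − v t + L)) for all 0 ≤ t ≤ 1 and x ≤ vt + L. -/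
open Real MeasureTheory

/-!
Translating `√h` by `u` costs at most a factor `e^{k|u|}` with `k = (1 + |1 - δ/2|)/2`, because
`1 + |w + u| ≤ (1 + |w|) e^{|u|}`. Since `G(τ, ·)` is the centred Gaussian density of variance `2τ`,
`∫ G(τ, u) e^{k|u|} du ≤ 2 e^{k²τ}`, so for `τ = t - s` each inner integral over `y` is at most
`2 e^{(1 + k²)τ} √h(x - vs + L)`, and moving from `x - vs + L` to `x - vt + L` costs `e^{k|v|}`.
Integrating this uniform bound over `s ∈ (0, t)` with `t ≤ 1` gives the estimate.
-/

lemma exp_neg_mul_sq_add_mul_eq {b : ℝ} (hb : b ≠ 0) (c u : ℝ) :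
    exp (-b * u ^ 2 + c * u) = exp (c ^ 2 / (4 * b)) * exp (-b * (u - c / (2 * b)) ^ 2) := by
  rw [← exp_add]
  congr 1
  field_simp
  ring

lemma integrable_exp_neg_mul_sq_add_mul {b : ℝ} (hb : 0 < b) (c : ℝ) :
    Integrable fun u : ℝ => exp (-b * u ^ 2 + c * u) := by
  simp_rw [exp_neg_mul_sq_add_mul_eq hb.ne' c]
  exact ((integrable_exp_neg_mul_sq hb).comp_sub_right _).const_mul _

lemma integral_exp_neg_mul_sq_add_mul {b : ℝ} (hb : 0 < b) (c : ℝ) :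
    ∫ u : ℝ, exp (-b * u ^ 2 + c * u) = √(π / b) * exp (c ^ 2 / (4 * b)) := by
  simp_rw [exp_neg_mul_sq_add_mul_eq hb.ne' c]
  rw [integral_const_mul, integral_sub_right_eq_self (fun u => exp (-b * u ^ 2)),
    integral_gaussian, mul_comm]

noncomputable def heatKernel (t x : ℝ) : ℝ :=
  (4 * π * t) ^ (-(1 / 2) : ℝ) * exp (-x ^ 2 / (4 * t))

namespace heatKernel

variable {τ : ℝ}

lemma nonneg (hτ : 0 ≤ τ) (x : ℝ) : 0 ≤ heatKernel τ x := by
  unfold heatKernel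
  positivity

lemma sub_comm (x y : ℝ) : heatKernel τ (x - y) = heatKernel τ (y - x) := by
  rw [heatKernel, heatKernel, ← neg_sub, neg_sq]

lemma mul_exp_eq (c u : ℝ) :
    heatKernel τ u * exp (c * u) =
      (4 * π * τ) ^ (-(1 / 2) : ℝ) * exp (-(4 * τ)⁻¹ * u ^ 2 + c * u) := by
  rw [heatKernel, mul_assoc, ← exp_add]
  congr 3
  ring

lemma integrable_mul_exp (hτ : 0 < τ) (c : ℝ) :
    Integrable fun u => heatKernel τ u * exp (c * u) := by
  simp_rw [mul_exp_eq]
  exact (integrable_exp_neg_mul_sq_add_mul (by positivity) c).const_mul _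

lemma integral_mul_exp (hτ : 0 < τ) (c : ℝ) :
    ∫ u, heatKernel τ u * exp (c * u) = exp (c ^ 2 * τ) := by
  have h4 : 0 < 4 * π * τ := by positivity
  simp_rw [mul_exp_eq]
  rw [integral_const_mul, integral_exp_neg_mul_sq_add_mul (by positivity), div_inv_eq_mul,
    show π * (4 * τ) = 4 * π * τ by ring, rpow_neg h4.le, ← sqrt_eq_rpow, ← mul_assoc,
    inv_mul_cancel₀ (sqrt_pos.mpr h4).ne', one_mul]
  congr 1
  field_simp

end heatKernel

def ExpModerate (k : ℝ) (φ : ℝ → ℝ) : Prop :=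
  ∀ w u, φ (w + u) ≤ φ w * exp (k * |u|)

lemma expModerate_one_add_abs_mul_exp (β : ℝ) :
    ExpModerate (1 + |β|) fun x => (1 + |x|) * exp (β * |x|) := by
  intro w u
  dsimp only
  have h_lin : 1 + |w + u| ≤ (1 + |w|) * exp |u| := by
    nlinarith [abs_add_le w u, add_one_le_exp |u|, abs_nonneg w, abs_nonneg u]
  have h_exp : β * |w + u| ≤ β * |w| + |β| * |u| := by
    have : β * (|w + u| - |w|) ≤ |β| * |u| := by
      calc β * (|w + u| - |w|) ≤ |β * (|w + u| - |w|)| := le_abs_self _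
        _ = |β| * |(|w + u| - |w|)| := abs_mul _ _
        _ ≤ |β| * |u| := mul_le_mul_of_nonneg_left
          (by simpa using abs_abs_sub_abs_le_abs_sub (w + u) w) (abs_nonneg β)
    linarith
  calc (1 + |w + u|) * exp (β * |w + u|)
      ≤ ((1 + |w|) * exp |u|) * exp (β * |w| + |β| * |u|) := by gcongr
    _ = (1 + |w|) * exp (β * |w|) * exp ((1 + |β|) * |u|) := by
      rw [show (1 + |β|) * |u| = |u| + |β| * |u| by ring, exp_add, exp_add]
      ring

namespace ExpModerate

variable {k : ℝ} {φ : ℝ → ℝ}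

lemma sqrt (hφ : ExpModerate k φ) : ExpModerate (k / 2) fun x => √(φ x) := by
  intro w u
  have h_sq : exp (k * |u|) = exp (k / 2 * |u|) ^ 2 := by
    rw [← exp_nat_mul]
    ring_nf
  calc √(φ (w + u)) ≤ √(φ w * exp (k / 2 * |u|) ^ 2) := sqrt_le_sqrt (h_sq ▸ hφ w u)
    _ = √(φ w) * exp (k / 2 * |u|) := by
        rw [sqrt_mul' _ (by positivity), sqrt_sq (exp_pos _).le]

lemma integral_heatKernel_sub_mul_le (hφ : ExpModerate k φ) (hφ0 : ∀ x, 0 ≤ φ x)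
    {τ : ℝ} (hτ : 0 < τ) (x : ℝ) :
    ∫ y, heatKernel τ (x - y) * φ y ≤ 2 * exp (k ^ 2 * τ) * φ x := by
  set g : ℝ → ℝ := fun u => heatKernel τ u * exp (k * u) + heatKernel τ u * exp (-k * u)
  have hg : Integrable g :=
    (heatKernel.integrable_mul_exp hτ k).add (heatKernel.integrable_mul_exp hτ (-k))
  have h_le : ∀ y, heatKernel τ (x - y) * φ y ≤ φ x * g (y - x) := by
    intro y
    have h_abs : exp (k * |y - x|) ≤ exp (k * (y - x)) + exp (-k * (y - x)) := by
      rcases abs_choice (y - x) with h | h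
      · rw [h]
        linarith [exp_pos (-k * (y - x))]
      · rw [h, mul_neg, ← neg_mul]
        linarith [exp_pos (k * (y - x))]
    calc heatKernel τ (x - y) * φ y
        ≤ heatKernel τ (y - x) * (φ x * exp (k * |y - x|)) := by
          rw [heatKernel.sub_comm]
          gcongr
          · exact heatKernel.nonneg hτ.le _
          · simpa using hφ x (y - x)
      _ ≤ heatKernel τ (y - x) * (φ x * (exp (k * (y - x)) + exp (-k * (y - x)))) := by
          gcongr
          · exact heatKernel.nonneg hτ.le _
          · exact hφ0 x
      _ = φ x * g (y - x) := by ring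
  calc ∫ y, heatKernel τ (x - y) * φ y ≤ ∫ y, φ x * g (y - x) :=
        integral_mono_of_nonneg (.of_forall fun y => mul_nonneg (heatKernel.nonneg hτ.le _)
          (hφ0 y)) ((hg.comp_sub_right x).const_mul _) (.of_forall h_le)
    _ = 2 * exp (k ^ 2 * τ) * φ x := by
        rw [integral_const_mul, integral_sub_right_eq_self g x, integral_add
          (heatKernel.integrable_mul_exp hτ k) (heatKernel.integrable_mul_exp hτ (-k)),
          heatKernel.integral_mul_exp hτ, heatKernel.integral_mul_exp hτ, neg_sq]
        ring

lemma apply_le (hφ : ExpModerate k φ) (hφ0 : ∀ x, 0 ≤ φ x) (hk : 0 ≤ k) {w z r : ℝ}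
    (h : |w - z| ≤ r) : φ w ≤ φ z * exp (k * r) := by
  calc φ w = φ (z + (w - z)) := by rw [add_sub_cancel]
    _ ≤ φ z * exp (k * |w - z|) := hφ z (w - z)
    _ ≤ φ z * exp (k * r) := by
      have := hφ0 z
      gcongr

lemma norm_integral_exp_mul_heatKernel_mul_le (hφ : ExpModerate k φ) (hφ0 : ∀ x, 0 ≤ φ x)
    (hk : 0 ≤ k) (v L x : ℝ) {s t : ℝ} (hst : s < t) (hts : t - s ≤ 1) :
    ‖∫ y, exp (t - s) * heatKernel (t - s) (x - y) * φ (y - v * s + L)‖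
      ≤ 2 * exp (1 + k ^ 2) * exp (k * |v|) * φ (x - v * t + L) := by
  have hτ : 0 < t - s := by linarith
  have h_frame : ExpModerate k fun y => φ (y - v * s + L) := fun w u => by
    simpa only [show w + u - v * s + L = w - v * s + L + u by ring] using hφ _ u
  have h_move : φ (x - v * s + L) ≤ φ (x - v * t + L) * exp (k * |v|) := by
    refine hφ.apply_le hφ0 hk ?_
    rw [show x - v * s + L - (x - v * t + L) = v * (t - s) by ring, abs_mul, abs_of_pos hτ]
    exact mul_le_of_le_one_right (abs_nonneg v) hts
  simp_rw [mul_assoc (exp (t - s))]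
  rw [integral_const_mul, norm_of_nonneg (mul_nonneg (exp_pos _).le (integral_nonneg
    fun y => mul_nonneg (heatKernel.nonneg hτ.le _) (hφ0 _)))]
  calc exp (t - s) * ∫ y, heatKernel (t - s) (x - y) * φ (y - v * s + L)
      ≤ exp (t - s) * (2 * exp (k ^ 2 * (t - s)) * φ (x - v * s + L)) := by
        gcongr
        exact h_frame.integral_heatKernel_sub_mul_le (fun _ => hφ0 _) hτ x
    _ ≤ exp 1 * (2 * exp (k ^ 2 * 1) * (φ (x - v * t + L) * exp (k * |v|))) := by
        have := hφ0 (x - v * s + L)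
        gcongr
    _ = 2 * exp (1 + k ^ 2) * exp (k * |v|) * φ (x - v * t + L) := by
        rw [mul_one, exp_add]
        ring

end ExpModerate

lemma integral_Ioc_le_of_forall_Ioo_norm_le {f : ℝ → ℝ} {a b B : ℝ} (hab : a ≤ b)
    (hf : ∀ s ∈ Set.Ioo a b, ‖f s‖ ≤ B) : ∫ s in Set.Ioc a b, f s ≤ (b - a) * B := by
  rw [integral_Ioc_eq_integral_Ioo]
  calc ∫ s in Set.Ioo a b, f s ≤ ‖∫ s in Set.Ioo a b, f s‖ := le_norm_self _
    _ ≤ B * volume.real (Set.Ioo a b) := norm_setIntegral_le_of_norm_le_const measure_Ioo_lt_top hf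
    _ = (b - a) * B := by rw [Real.volume_real_Ioo_of_le hab, mul_comm]

theorem convolution_stability_general (v L δ : ℝ)
    (h : ℝ → ℝ) (hh : ∀ x, h x = (1 + |x|) * Real.exp ((1 - δ/2) * |x|)) :
    ∃ C : ℝ, 0 < C ∧ ∀ t x : ℝ, 0 ≤ t → t ≤ 1 → x ≤ v*t + L →
      (∫ s in Set.Ioc (0:ℝ) t, ∫ y : ℝ,
        Real.exp (t - s) * ((4*π*(t - s)) ^ (-(1/2) : ℝ) * Real.exp (-(x - y)^2/(4*(t - s))))
          * Real.sqrt (h (y - v*s + L)))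
      ≤ C * Real.sqrt (h (x - v*t + L)) := by
  obtain rfl : h = _ := funext hh
  set k := (1 + |1 - δ / 2|) / 2
  have hmod : ExpModerate k fun x => √((1 + |x|) * exp ((1 - δ / 2) * |x|)) :=
    (expModerate_one_add_abs_mul_exp _).sqrt
  refine ⟨2 * exp (1 + k ^ 2) * exp (k * |v|), by positivity, fun t x ht0 ht1 _ => ?_⟩
  refine (integral_Ioc_le_of_forall_Ioo_norm_le ht0 fun s hs =>
    hmod.norm_integral_exp_mul_heatKernel_mul_le (fun _ => sqrt_nonneg _) (by positivity) v L x
      hs.2 (by linarith [hs.1])).trans ?_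
  rw [sub_zero]
  exact mul_le_of_le_one_left (by positivity) ht1

/-- Convolution stability estimate: with `h x = (1+|x|)e^{(1-δ/2)|x|}`,
`1 ≤ λ ≤ 2`, `vλ - λ²/2 ≥ 2a`, `a ≥ 0`, `L ≥ 0`, there is `C` such that for `t ∈ [0,1]`
and `x ≤ vt + L`,
`∫∫₀^t e^{t-s}·G(t-s, x-y)·√(h(y - vs + L)) ds dy ≤ C·√(h(x - vt + L))`. -/
theorem convolution_stability (v lam a L δ : ℝ)
    (hlam1 : 1 ≤ lam) (hlam2 : lam ≤ 2) (ha : 0 ≤ a)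
    (hva : 2*a ≤ v*lam - lam^2/2) (hL : 0 ≤ L) (hδ : δ ∈ Set.Ioo (0:ℝ) 1)
    (h : ℝ → ℝ) (hh : ∀ x, h x = (1 + |x|) * Real.exp ((1 - δ/2) * |x|)) :
    ∃ C : ℝ, 0 < C ∧ ∀ t x : ℝ, 0 ≤ t → t ≤ 1 → x ≤ v*t + L →
      (∫ s in Set.Ioc (0:ℝ) t, ∫ y : ℝ,
        Real.exp (t - s) * ((4*π*(t - s)) ^ (-(1/2) : ℝ) * Real.exp (-(x - y)^2/(4*(t - s))))
          * Real.sqrt (h (y - v*s + L)))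
      ≤ C * Real.sqrt (h (x - v*t + L)) :=
  convolution_stability_general v L δ h hh
end

section
/- Let δ ∈ (0,1/2), ε ∈ (0,1), v > 0, L > 0, and define x_lin(t) = ε²·δ̂^{−1/2}·e^{(1−δ/2)t}·sin(δ̂^{1/2}t) with δ̂ = δ − δ²/4, and suppose |log ε| is large enough that exp(|log ε|^{−3}) ≤ 2. Then for all x, ∫₀¹ ∫_{y ≤ vs} (e^{−(y−x)²/(2(1−s))}/(4π(1−s))) · min{ ε²δ^{−1/2}·e^{vs − y + L}, α/2 } ds dy ≤ min{ 4ε²δ^{−1/2}·e^{−(x−L−v)}, α } for any α ∈ (0,1]. -/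
/-!
The kernel `heatKernelSq t (y - x)` has spatial mass `t ^ (-1/2) / (2√(2π))` and
`∫₀¹ (1 - s) ^ (-1/2) ds = 2`, so its space-time mass over `(0, 1] × ℝ` is `1/√(2π) ≤ 1`;
with `q̄ ≤ α/2` this gives the bound `α`. For the other bound, completing the square gives
`heatKernelSq t (y - x) e^(-y) = e^(t/2 - x) heatKernelSq t (y - (x - t))`, so using
`q̄ ≤ ε²δ^(-1/2) e^(v + L - y)` costs only the factor `e^(1/2) e^(L + v - x)`, and `e^(1/2) ≤ √(2π)`.
-/

open Real MeasureTheory Set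

/-- The square of the heat kernel `(4πt)^(-1/2) e^(-z²/(4t))` of `∂ₜ - ∂²ₓ`. -/
noncomputable def heatKernelSq (t z : ℝ) : ℝ := exp (-z ^ 2 / (2 * t)) / (4 * π * t)

lemma heatKernelSq_nonneg {t : ℝ} (ht : 0 ≤ t) (z : ℝ) : 0 ≤ heatKernelSq t z := by
  unfold heatKernelSq; positivity

lemma integrable_heatKernelSq {t : ℝ} (ht : 0 < t) (c : ℝ) :
    Integrable fun y => heatKernelSq t (y - c) := by
  have hb : 0 < (2 * t)⁻¹ := by positivity
  refine (((integrable_exp_neg_mul_sq hb).comp_sub_right c).div_const (4 * π * t)).congr (ae_of_all _ fun y => ?_)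
  simp only [heatKernelSq]
  congr 2
  ring

lemma integral_heatKernelSq {t : ℝ} (ht : 0 < t) (c : ℝ) :
    ∫ y, heatKernelSq t (y - c) = t ^ (-(1 / 2) : ℝ) / (2 * √(2 * π)) := by
  have hshape : ∀ y, heatKernelSq t (y - c) = exp (-(2 * t)⁻¹ * (y - c) ^ 2) / (4 * π * t) :=
    fun y => by simp only [heatKernelSq]; congr 2; ring
  simp_rw [hshape, integral_div]
  rw [integral_sub_right_eq_self (fun y => exp (-(2 * t)⁻¹ * y ^ 2)), integral_gaussian,
    show π / (2 * t)⁻¹ = 2 * π * t by rw [div_inv_eq_mul]; ring, rpow_neg ht.le,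
    ← sqrt_eq_rpow, sqrt_mul (by positivity) t]
  have : 0 < √t := sqrt_pos.mpr ht
  field_simp
  rw [sq_sqrt (by positivity), sq_sqrt ht.le]
  ring

lemma setIntegral_le_of_le_heatKernelSq {t c D : ℝ} (ht : 0 < t) (S : Set ℝ) {f : ℝ → ℝ}
    (hf0 : ∀ y, 0 ≤ f y) (hf : ∀ y, f y ≤ D * heatKernelSq t (y - c)) :
    ∫ y in S, f y ≤ D * (t ^ (-(1 / 2) : ℝ) / (2 * √(2 * π))) := by
  have hDK : Integrable fun y => D * heatKernelSq t (y - c) :=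
    (integrable_heatKernelSq ht c).const_mul D
  calc ∫ y in S, f y ≤ ∫ y in S, D * heatKernelSq t (y - c) :=
        integral_mono_of_nonneg (ae_of_all _ hf0) hDK.integrableOn (ae_of_all _ hf)
    _ ≤ ∫ y, D * heatKernelSq t (y - c) :=
        setIntegral_le_integral hDK (ae_of_all _ fun y => (hf0 y).trans (hf y))
    _ = D * (t ^ (-(1 / 2) : ℝ) / (2 * √(2 * π))) := by
        rw [integral_const_mul, integral_heatKernelSq ht]

lemma integrableOn_one_sub_rpow_neg_half :
    IntegrableOn (fun s : ℝ => (1 - s) ^ (-(1 / 2) : ℝ)) (Ioo 0 1) := by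
  have h := (intervalIntegral.intervalIntegrable_rpow' (a := 0) (b := 1)
    (r := -(1 / 2)) (by norm_num)).comp_sub_left 1
  norm_num at h
  exact ((intervalIntegrable_iff_integrableOn_Ioc_of_le zero_le_one).mp h.symm).mono_set
    Ioo_subset_Ioc_self

lemma integral_one_sub_rpow_neg_half :
    ∫ s in Ioo (0 : ℝ) 1, (1 - s) ^ (-(1 / 2) : ℝ) = 2 := by
  rw [← integral_Ioc_eq_integral_Ioo, ← intervalIntegral.integral_of_le zero_le_one,
    intervalIntegral.integral_comp_sub_left (fun u : ℝ => u ^ (-(1 / 2) : ℝ)) 1,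
    integral_rpow (Or.inl (by norm_num))]
  norm_num

lemma integral_setIntegral_le_of_le_heatKernelSq {D : ℝ} (S : ℝ → Set ℝ) (c : ℝ → ℝ)
    {F : ℝ → ℝ → ℝ} (hF0 : ∀ s ∈ Ioo (0 : ℝ) 1, ∀ y, 0 ≤ F s y)
    (hF : ∀ s ∈ Ioo (0 : ℝ) 1, ∀ y, F s y ≤ D * heatKernelSq (1 - s) (y - c s)) :
    ∫ s in Ioc 0 1, ∫ y in S s, F s y ≤ D / √(2 * π) := by
  have hinner : ∀ s ∈ Ioo (0 : ℝ) 1,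
      ∫ y in S s, F s y ≤ D / (2 * √(2 * π)) * (1 - s) ^ (-(1 / 2) : ℝ) := fun s hs => by
    rw [div_mul_comm, mul_comm]
    exact setIntegral_le_of_le_heatKernelSq (sub_pos.mpr hs.2) (S s) (hF0 s hs) (hF s hs)
  rw [integral_Ioc_eq_integral_Ioo]
  calc ∫ s in Ioo 0 1, ∫ y in S s, F s y
        ≤ ∫ s in Ioo 0 1, D / (2 * √(2 * π)) * (1 - s) ^ (-(1 / 2) : ℝ) :=
        integral_mono_of_nonneg
          (ae_restrict_of_forall_mem measurableSet_Ioo fun s hs => integral_nonneg (hF0 s hs))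
          (integrableOn_one_sub_rpow_neg_half.const_mul _)
          (ae_restrict_of_forall_mem measurableSet_Ioo hinner)
    _ = D / √(2 * π) := by
        rw [integral_const_mul, integral_one_sub_rpow_neg_half]; ring

lemma heatKernelSq_mul_exp_neg {t : ℝ} (ht : t ≠ 0) (x y : ℝ) :
    heatKernelSq t (y - x) * exp (-y) = exp (t / 2 - x) * heatKernelSq t (y - (x - t)) := by
  simp only [heatKernelSq]
  rw [div_mul_eq_mul_div, mul_div_assoc', ← exp_add, ← exp_add]
  congr 2
  field_simp
  ring

lemma heatKernelSq_mul_le_of_le_exp {t C q a x y : ℝ} (ht : 0 < t) (ht1 : t ≤ 1) (hC : 0 ≤ C)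
    (hq : q ≤ C * exp (a - y)) :
    heatKernelSq t (y - x) * q ≤
      C * exp (a - x) * exp (1 / 2) * heatKernelSq t (y - (x - t)) := by
  have hK := heatKernelSq_nonneg ht.le
  calc heatKernelSq t (y - x) * q ≤ C * exp a * (heatKernelSq t (y - x) * exp (-y)) := by
        rw [sub_eq_add_neg, exp_add] at hq
        exact (mul_le_mul_of_nonneg_left hq (hK _)).trans_eq (by ring)
    _ = C * exp (a + (t / 2 - x)) * heatKernelSq t (y - (x - t)) := by
        rw [heatKernelSq_mul_exp_neg ht.ne', exp_add]; ring
    _ ≤ C * exp (a - x + 1 / 2) * heatKernelSq t (y - (x - t)) := by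
        gcongr C * exp ?_ * _
        · exact hK _
        linarith
    _ = C * exp (a - x) * exp (1 / 2) * heatKernelSq t (y - (x - t)) := by
        rw [exp_add]; ring

lemma exp_half_le_sqrt_two_mul_pi : exp (1 / 2) ≤ √(2 * π) := by
  rw [exp_half]
  exact sqrt_le_sqrt (by linarith [exp_one_lt_d9, pi_gt_three])

theorem greens_function_bound_general (δ ε v L α : ℝ)
    (hδ : δ ∈ Set.Ioo (0:ℝ) (1/2))
    (hv : 0 < v)
    (hα : α ∈ Set.Ioc (0:ℝ) 1) :
    ∀ x : ℝ,
      (∫ s in Set.Ioc (0:ℝ) 1, ∫ y in Set.Iic (v*s),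
        Real.exp (-(y - x)^2/(2*(1 - s))) / (4*π*(1 - s)) *
          min (ε^2 * δ ^ (-(1/2) : ℝ) * Real.exp (v*s - y + L)) (α/2))
      ≤ min (4 * ε^2 * δ ^ (-(1/2) : ℝ) * Real.exp (-(x - L - v))) α := by
  intro x
  set C := ε ^ 2 * δ ^ (-(1 / 2) : ℝ)
  have hC : 0 ≤ C := by have := hδ.1; positivity
  have hK : ∀ s ∈ Ioo (0 : ℝ) 1, ∀ y,
      0 ≤ heatKernelSq (1 - s) (y - x) * min (C * exp (v * s - y + L)) (α / 2) :=
    fun s hs y => mul_nonneg (heatKernelSq_nonneg (by linarith [hs.2]) _)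
      (le_min (by positivity) (by linarith [hα.1]))
  have h2π := exp_half_le_sqrt_two_mul_pi
  have h1 : 1 ≤ √(2 * π) := (one_le_exp (by norm_num)).trans h2π
  refine le_min ?_ ?_
  · refine (integral_setIntegral_le_of_le_heatKernelSq (D := C * exp (-(x - L - v)) * exp (1 / 2))
      _ (fun s => x - (1 - s)) hK fun s hs y => ?_).trans ?_
    · have hq : C * exp (v * s - y + L) ≤ C * exp (v + L - y) := by gcongr; nlinarith [hs.2]
      exact (heatKernelSq_mul_le_of_le_exp (t := 1 - s) (by linarith [hs.2]) (by linarith [hs.1])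
        hC ((min_le_left _ _).trans hq)).trans_eq (by rw [show v + L - x = -(x - L - v) by ring])
    · have hCE : 0 ≤ C * exp (-(x - L - v)) := by positivity
      calc C * exp (-(x - L - v)) * exp (1 / 2) / √(2 * π)
          = C * exp (-(x - L - v)) * (exp (1 / 2) / √(2 * π)) := by ring
        _ ≤ C * exp (-(x - L - v)) :=
          mul_le_of_le_one_right hCE ((div_le_one (by positivity)).mpr h2π)
        _ ≤ 4 * ε ^ 2 * δ ^ (-(1 / 2) : ℝ) * exp (-(x - L - v)) := by linarith
  · refine (integral_setIntegral_le_of_le_heatKernelSq (D := α / 2) _ (fun _ => x) hK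
      fun s hs y => ?_).trans ?_
    · rw [mul_comm (α / 2)]
      exact mul_le_mul_of_nonneg_left (min_le_right _ _)
        (heatKernelSq_nonneg (by linarith [hs.2]) _)
    · exact (div_le_self (by linarith [hα.1]) h1).trans (by linarith [hα.1])

/-- Green's-function bound `(G² ⋆ q̄)(1,x) ≤ min{4ε²δ^{-1/2}e^{-(x-L-v)}, α}`
from the lower-bound construction, where `q̄(s,y) = min{ε²δ^{-1/2}e^{vs-y+L}, α/2}`. -/
theorem greens_function_bound (δ ε v L α : ℝ)
    (hδ : δ ∈ Set.Ioo (0:ℝ) (1/2)) (hε : ε ∈ Set.Ioo (0:ℝ) 1)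
    (hv : 0 < v) (hL : 0 < L)
    (hlog : Real.exp (|Real.log ε| ^ (-(3:ℝ))) ≤ 2)
    (hα : α ∈ Set.Ioc (0:ℝ) 1) :
    ∀ x : ℝ,
      (∫ s in Set.Ioc (0:ℝ) 1, ∫ y in Set.Iic (v*s),
        Real.exp (-(y - x)^2/(2*(1 - s))) / (4*π*(1 - s)) *
          min (ε^2 * δ ^ (-(1/2) : ℝ) * Real.exp (v*s - y + L)) (α/2))
      ≤ min (4 * ε^2 * δ ^ (-(1/2) : ℝ) * Real.exp (-(x - L - v))) α :=
  greens_function_bound_general δ ε v L α hδ hv hα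
end
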